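/- Let L be the free Lie algebra over ℚ on generators x₁, …, x_n. The multilinear component of degree n — the ℚ-subspace spanned by all Lie monomials in which each generator x_i appears exactly once — has dimension (n−1)!, with basis the left-normed brackets [x_{σ(1)}, [x_{σ(2)}, [⋯, [x_{σ(n−1)}, x_n]⋯]]] for σ ranging over permutations of {1, …, n−1}. -/

import Mathlib

/-- `IsLieMon v s` says that `v` is a Lie monomial (an iterated bracket of generators) in the
free Lie algebra, whose multiset of occurring generators (with multiplicity) is `s`. -/
inductive IsLieMon {n : ℕ} : FreeLieAlgebra ℚ (Fin n) → Multiset (Fin n) → Prop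
  | of (i : Fin n) : IsLieMon (FreeLieAlgebra.of ℚ i) {i}
  | bracket {x y : FreeLieAlgebra ℚ (Fin n)} {s t : Multiset (Fin n)} :
      IsLieMon x s → IsLieMon y t → IsLieMon ⁅x, y⁆ (s + t)

/-- The multilinear component of degree `n`: the `ℚ`-subspace of the free Lie algebra on `n`
generators spanned by the Lie monomials in which every generator appears exactly once. -/
noncomputable def MultilinearPart (n : ℕ) : Submodule ℚ (FreeLieAlgebra ℚ (Fin n)) :=
  Submodule.span ℚ {v | IsLieMon v (Finset.univ.val : Multiset (Fin n))}

/-- The left-normed bracket `[x_{σ(0)}, [x_{σ(1)}, [⋯, [x_{σ(n-1)}, x_n]⋯]]]` in the free Lie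
algebra on generators `x_0, …, x_n`, for a permutation `σ` of the first `n` generators. -/
noncomputable def leftNormed (n : ℕ) (σ : Equiv.Perm (Fin n)) : FreeLieAlgebra ℚ (Fin (n + 1)) :=
  (List.ofFn fun i : Fin n => Fin.castSucc (σ i)).foldr
    (fun i acc => ⁅FreeLieAlgebra.of ℚ i, acc⁆) (FreeLieAlgebra.of ℚ (Fin.last n))

/-!
By the Jacobi identity, bracketing a Lie monomial `u` with a nested bracket
`[a₁, [a₂, [⋯, [a_k, z]⋯]]]` gives a combination of nested brackets ending in `z` whose prefixes
consist of the generators of `u` and the `aᵢ`. With antisymmetry it follows that a monomial in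
which `z` occurs exactly once is such a combination, so for `z = x_n` the multilinear part is
spanned by the `n!` left-normed brackets.

These are linearly independent already in the free associative algebra: expanding
`[a, X] = aX - Xa`, only `aX` contributes to words ending in `z` when `a ≠ z`, so the nested
bracket with prefix `w` has coefficient `1` on the word `w z` and `0` on every other word `v z`.
-/

namespace MonoidAlgebra

variable {R X : Type*} [Semiring R]

theorem coeff_single_of_mul_of_mul (x : MonoidAlgebra R (FreeMonoid X)) (a b : X)
    (u : FreeMonoid X) [Decidable (a = b)] :
    (single (FreeMonoid.of a) 1 * x).coeff (FreeMonoid.of b * u) =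
      if a = b then x.coeff u else 0 := by
  split_ifs with hab
  · subst hab
    rw [coeff_single_mul_eq_mul_coeff u fun _ _ => mul_right_inj _, one_mul]
  · refine coeff_single_mul_of_forall_mul_ne _ _ fun d hd => hab ?_
    exact (List.cons_eq_cons.mp (congrArg FreeMonoid.toList hd)).1

theorem coeff_mul_single_of_mul_of_ne (x : MonoidAlgebra R (FreeMonoid X)) {a b : X}
    (hab : a ≠ b) (u : FreeMonoid X) :
    (x * single (FreeMonoid.of a) 1).coeff (u * FreeMonoid.of b) = 0 := by
  refine coeff_mul_single_of_forall_mul_ne _ _ fun d hd => hab ?_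
  have := List.append_inj_right' (congrArg FreeMonoid.toList hd) rfl
  exact List.singleton_injective this

end MonoidAlgebra

namespace FreeLieAlgebra

variable (R : Type*) {X : Type*} [CommRing R]

noncomputable def nestedBracket (l : List X) (z : X) : FreeLieAlgebra R X :=
  l.foldr (fun a v => ⁅of R a, v⁆) (of R z)

variable {R}

@[simp] theorem nestedBracket_nil (z : X) : nestedBracket R [] z = of R z := rfl

@[simp] theorem nestedBracket_cons (a : X) (l : List X) (z : X) :
    nestedBracket R (a :: l) z = ⁅of R a, nestedBracket R l z⁆ := rfl

section FreeMonoidAlgebra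

attribute [local instance] LieRing.ofAssociativeRing

variable (R) in
noncomputable def toFreeMonoidAlgebra :
    FreeLieAlgebra R X →ₗ⁅R⁆ MonoidAlgebra R (FreeMonoid X) :=
  lift R fun x => MonoidAlgebra.single (FreeMonoid.of x) 1

theorem coeff_toFreeMonoidAlgebra_nestedBracket [DecidableEq X] {z : X} {l : List X}
    (hz : z ∉ l) (w : List X) :
    (toFreeMonoidAlgebra R (nestedBracket R l z)).coeff (FreeMonoid.ofList w * FreeMonoid.of z) =
      if w = l then 1 else 0 := by
  induction l generalizing w with
  | nil =>
    classical
    rw [nestedBracket_nil, toFreeMonoidAlgebra, lift_of_apply, MonoidAlgebra.coeff_single,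
      Finsupp.single_apply]
    simp [eq_comm (a := FreeMonoid.of z), ← FreeMonoid.ofList_nil]
  | cons a l ih =>
    obtain ⟨hza, hzl⟩ := List.mem_cons.not.mp hz |> not_or.mp
    rw [nestedBracket_cons, LieHom.map_lie, Ring.lie_def, MonoidAlgebra.coeff_sub,
      Finsupp.sub_apply, toFreeMonoidAlgebra, lift_of_apply, ← toFreeMonoidAlgebra,
      MonoidAlgebra.coeff_mul_single_of_mul_of_ne _ (Ne.symm hza), sub_zero]
    cases w with
    | nil =>
      simpa [Ne.symm hza] using MonoidAlgebra.coeff_single_of_mul_of_mul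
        (toFreeMonoidAlgebra R (nestedBracket R l z)) a z 1
    | cons b w =>
      rw [FreeMonoid.ofList_cons, mul_assoc, MonoidAlgebra.coeff_single_of_mul_of_mul, ih hzl]
      simp [eq_comm, ite_and]

theorem linearIndependent_nestedBracket (z : X) :
    LinearIndependent R fun l : {l : List X // z ∉ l} => nestedBracket R l.1 z := by
  classical
  let coeffAt (w : List X) : FreeLieAlgebra R X →ₗ[R] R :=
    Finsupp.lapply (FreeMonoid.ofList w * FreeMonoid.of z) ∘ₗ
      (MonoidAlgebra.coeffLinearEquiv R).toLinearMap ∘ₗ (toFreeMonoidAlgebra R).toLinearMap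
  let coeffs : FreeLieAlgebra R X →ₗ[R] {l : List X // z ∉ l} → R :=
    LinearMap.pi fun l => coeffAt l.1
  have h_single (l : {l : List X // z ∉ l}) : coeffs (nestedBracket R l.1 z) = Pi.single l 1 := by
    ext l'
    simp [coeffs, coeffAt, coeff_toFreeMonoidAlgebra_nestedBracket l.2, Pi.single_apply,
      Subtype.ext_iff]
  refine .of_comp coeffs ?_
  simpa only [Function.comp_def, h_single] using Pi.linearIndependent_single_one _ R

end FreeMonoidAlgebra

end FreeLieAlgebra

theorem List.Perm.exists_ofFn_comp_perm_eq {α : Type*} {n : ℕ} {f : Fin n → α}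
    (hf : Function.Injective f) {l : List α} (h : l.Perm (List.ofFn f)) :
    ∃ σ : Equiv.Perm (Fin n), List.ofFn (f ∘ σ) = l := by
  have hlen : l.length = n := h.length_eq.trans (List.length_ofFn)
  have hmem (i : Fin n) : l[i] ∈ Set.range f := by
    simpa using h.mem_iff.mp (List.getElem_mem (l := l) (hlen ▸ i.2))
  let g (i : Fin n) : Fin n := (Equiv.ofInjective f hf).symm ⟨l[i], hmem i⟩
  have hfg (i : Fin n) : f (g i) = l[i] := Equiv.apply_ofInjective_symm hf _
  have hg : Function.Injective g := fun i j hij => by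
    have := (h.nodup_iff.mpr (List.nodup_ofFn.mpr hf)).getElem_inj_iff.mp
      ((hfg i).symm.trans ((congrArg f hij).trans (hfg j)))
    exact Fin.ext this
  refine ⟨Equiv.ofBijective g (Finite.injective_iff_bijective.mp hg), ?_⟩
  exact List.ext_getElem (by simp [hlen]) fun i _ _ => by simp [hfg]

theorem Fin.univ_val_eq_last_cons (n : ℕ) :
    (Finset.univ : Finset (Fin (n + 1))).val =
      Fin.last n ::ₘ ↑(List.ofFn (Fin.castSucc : Fin n → Fin (n + 1))) := by
  rw [← Multiset.map_id Finset.univ.val, Fin.univ_val_map, List.ofFn_succ']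
  simp

open FreeLieAlgebra

section NestedBracketSpan

variable {n : ℕ}

noncomputable def nestedBracketSpan (z : Fin n) (s : Multiset (Fin n)) :
    Submodule ℚ (FreeLieAlgebra ℚ (Fin n)) :=
  Submodule.span ℚ {v | ∃ l : List (Fin n), (l : Multiset (Fin n)) = s ∧ nestedBracket ℚ l z = v}

theorem IsLieMon.lie_mem_nestedBracketSpan {u : FreeLieAlgebra ℚ (Fin n)}
    {s : Multiset (Fin n)} (hu : IsLieMon u s) {z : Fin n} {t : Multiset (Fin n)}
    {m : FreeLieAlgebra ℚ (Fin n)} (hm : m ∈ nestedBracketSpan z t) :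
    ⁅u, m⁆ ∈ nestedBracketSpan z (s + t) := by
  induction hu generalizing t m with
  | of i =>
    have hle : nestedBracketSpan z t ≤
        (nestedBracketSpan z ({i} + t)).comap (LieAlgebra.ad ℚ _ (FreeLieAlgebra.of ℚ i)) := by
      refine Submodule.span_le.mpr ?_
      rintro _ ⟨l, rfl, rfl⟩
      exact Submodule.subset_span ⟨i :: l, by simp [Multiset.singleton_add], rfl⟩
    exact hle hm
  | @bracket x y sx sy _ _ ihx ihy =>
    rw [lie_lie]
    refine Submodule.sub_mem _ ?_ ?_
    · simpa only [add_assoc] using ihx (ihy hm)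
    · simpa only [add_assoc, add_left_comm sy sx] using ihy (ihx hm)

theorem IsLieMon.mem_nestedBracketSpan {v : FreeLieAlgebra ℚ (Fin n)} {s : Multiset (Fin n)}
    (hv : IsLieMon v s) {z : Fin n} (hz : s.count z = 1) :
    v ∈ nestedBracketSpan z (s.erase z) := by
  induction hv with
  | of i =>
    obtain rfl : i = z := by simpa [Multiset.count_singleton, eq_comm] using hz
    exact Submodule.subset_span ⟨[], by simp, rfl⟩
  | @bracket x y sx sy hx hy ihx ihy =>
    rw [Multiset.count_add] at hz
    rcases Nat.add_eq_one_iff.mp hz with ⟨hzx, hzy⟩ | ⟨hzx, hzy⟩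
    · rw [Multiset.erase_add_right_pos sx (Multiset.count_pos.mp (by omega))]
      exact hx.lie_mem_nestedBracketSpan (ihy hzy)
    · rw [Multiset.erase_add_left_pos sy (Multiset.count_pos.mp (by omega)), add_comm,
        ← lie_skew]
      exact Submodule.neg_mem _ (hy.lie_mem_nestedBracketSpan (ihx hzx))

theorem isLieMon_nestedBracket (l : List (Fin n)) (z : Fin n) :
    IsLieMon (nestedBracket ℚ l z) (z ::ₘ (l : Multiset (Fin n))) := by
  induction l with
  | nil => exact IsLieMon.of z
  | cons a l ih =>
    have h := (IsLieMon.of a).bracket ih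
    rwa [Multiset.singleton_add, Multiset.cons_swap, Multiset.cons_coe] at h

end NestedBracketSpan

theorem leftNormed_eq_nestedBracket (n : ℕ) (σ : Equiv.Perm (Fin n)) :
    leftNormed n σ = nestedBracket ℚ (List.ofFn (Fin.castSucc ∘ σ)) (Fin.last n) := rfl

theorem linearIndependent_leftNormed (n : ℕ) : LinearIndependent ℚ (leftNormed n) := by
  have hlast (σ : Equiv.Perm (Fin n)) : Fin.last n ∉ List.ofFn (Fin.castSucc ∘ σ) := by
    simp [List.mem_ofFn, Fin.castSucc_ne_last]
  have hinj : Function.Injective fun σ : Equiv.Perm (Fin n) =>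
      (⟨List.ofFn (Fin.castSucc ∘ σ), hlast σ⟩ : {l // Fin.last n ∉ l}) := fun σ τ hστ =>
    Equiv.ext fun i =>
      Fin.castSucc_injective n (congrFun (List.ofFn_injective (congrArg Subtype.val hστ)) i)
  exact (linearIndependent_nestedBracket (Fin.last n)).comp _ hinj

theorem span_range_leftNormed (n : ℕ) :
    Submodule.span ℚ (Set.range (leftNormed n)) = MultilinearPart (n + 1) := by
  refine le_antisymm (Submodule.span_le.mpr ?_) (Submodule.span_le.mpr fun v hv => ?_)
  · rintro _ ⟨σ, rfl⟩
    refine Submodule.subset_span ?_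
    rw [Set.mem_ofPred_eq, Fin.univ_val_eq_last_cons, leftNormed_eq_nestedBracket,
      ← Multiset.coe_eq_coe.mpr (σ.ofFn_comp_perm Fin.castSucc)]
    exact isLieMon_nestedBracket _ _
  · have hv' := hv.mem_nestedBracketSpan (z := Fin.last n)
      (Multiset.count_eq_one_of_mem Finset.univ.nodup (Finset.mem_univ_val _))
    rw [Fin.univ_val_eq_last_cons, Multiset.erase_cons_head] at hv'
    refine Submodule.span_le.mpr ?_ hv'
    rintro _ ⟨l, hl, rfl⟩
    obtain ⟨σ, rfl⟩ :=
      (Multiset.coe_eq_coe.mp hl).exists_ofFn_comp_perm_eq (Fin.castSucc_injective n)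
    exact Submodule.subset_span ⟨σ, rfl⟩

/-- In the free Lie algebra over `ℚ` on `n+1` generators, the multilinear component of degree
`n+1` (the span of the Lie monomials in which each generator appears exactly once) has
dimension `n!`, with basis the left-normed brackets
`[x_{σ(0)}, [x_{σ(1)}, [⋯, [x_{σ(n-1)}, x_n]⋯]]]` for `σ` ranging over the permutations of the
first `n` generators. -/
theorem stmt18 (n : ℕ) :
    Module.finrank ℚ (MultilinearPart (n + 1)) = Nat.factorial n ∧
    ∃ b : Module.Basis (Equiv.Perm (Fin n)) ℚ (MultilinearPart (n + 1)),
      ∀ σ : Equiv.Perm (Fin n),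
        (b σ : FreeLieAlgebra ℚ (Fin (n + 1))) = leftNormed n σ := by
  let b := (Module.Basis.span (linearIndependent_leftNormed n)).map
    (LinearEquiv.ofEq _ _ (span_range_leftNormed n))
  have hb (σ : Equiv.Perm (Fin n)) : (b σ : FreeLieAlgebra ℚ (Fin (n + 1))) = leftNormed n σ := by
    simp [b, Module.Basis.span_apply]
  refine ⟨?_, b, hb⟩
  rw [Module.finrank_eq_card_basis b, Fintype.card_perm, Fintype.card_fin]
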